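/- arXiv:0805.2797 — 4 statements merged into one kernel-verified Lean document; each statement's English description precedes it below -/
import Mathlib

section
/- For a TU game v, a subset S ⊆ N is an equivalence class in v (all players in S are pairwise equivalent under ∼^v) if and only if for all coalitions T, Z ⊆ N with T∖S = Z∖S and |T| = |Z|, one has v(T) = v(Z). -/
/-- Marginal contribution of player `i` to coalition `S` in game `v`. -/
def marg {N : Type*} [DecidableEq N] (v : Finset N → ℝ) (i : N) (S : Finset N) : ℝ :=
  v (insert i S) - v S

/-- `S` is an equivalence class in `v`: all players in `S` are pairwise
equivalent under `∼^v`. -/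
def IsEqClass {N : Type*} [DecidableEq N] (v : Finset N → ℝ) (S : Finset N) : Prop :=
  ∀ i ∈ S, ∀ j ∈ S, ∀ U : Finset N, i ∉ U → j ∉ U → marg v i U = marg v j U

/-!
If all players of `S` are interchangeable, swapping a member of `S` inside a coalition for a
member of `S` outside it leaves the worth unchanged; since `T \ S = Z \ S` and `|T| = |Z|`,
`Z` is reached from `T` by `|T \ Z|` such swaps. Conversely, `U ∪ {i}` and `U ∪ {j}` agree
outside `S` and have the same size whenever `i, j ∈ S \ U`.
-/

open Finset

lemma marg_eq_marg_iff {N : Type*} [DecidableEq N] {v : Finset N → ℝ} {i j : N}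
    {U : Finset N} : marg v i U = marg v j U ↔ v (insert i U) = v (insert j U) := by
  simp only [marg, sub_left_inj]

section Exchange

variable {N : Type*} [DecidableEq N] {S T Z : Finset N} {i j : N}

lemma mem_of_mem_sdiff_of_sdiff_eq (hsd : T \ S = Z \ S) (hi : i ∈ T \ Z) : i ∈ S := by
  by_contra hiS
  have : i ∈ Z \ S := hsd ▸ mem_sdiff.mpr ⟨(mem_sdiff.mp hi).1, hiS⟩
  exact (mem_sdiff.mp hi).2 (mem_sdiff.mp this).1

lemma insert_erase_sdiff_of_mem (hiS : i ∈ S) (hjS : j ∈ S) :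
    insert j (T.erase i) \ S = T \ S := by
  rw [insert_sdiff_of_mem _ hjS, erase_sdiff_comm,
    erase_eq_of_notMem fun h => (mem_sdiff.mp h).2 hiS]

lemma card_insert_erase_of_mem_of_notMem (hiT : i ∈ T) (hjT : j ∉ T) :
    #(insert j (T.erase i)) = #T := by
  rw [card_insert_of_notMem fun h => hjT (mem_of_mem_erase h), card_erase_of_mem hiT,
    Nat.sub_add_cancel (card_pos.mpr ⟨i, hiT⟩)]

end Exchange

namespace IsEqClass

variable {N : Type*} [DecidableEq N] {v : Finset N → ℝ} {S : Finset N}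

lemma apply_insert_erase (hS : IsEqClass v S) {i j : N} {T : Finset N} (hiS : i ∈ S)
    (hjS : j ∈ S) (hiT : i ∈ T) (hjT : j ∉ T) : v (insert j (T.erase i)) = v T := by
  have h := marg_eq_marg_iff.mp
    (hS j hjS i hiS (T.erase i) (fun h => hjT (mem_of_mem_erase h)) (notMem_erase i T))
  rwa [insert_erase hiT] at h

theorem apply_eq_of_sdiff_eq_of_card_eq (hS : IsEqClass v S) {T Z : Finset N}
    (hsd : T \ S = Z \ S) (hcard : #T = #Z) : v T = v Z := by
  induction hn : #(T \ Z) generalizing T with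
  | zero =>
    have hTZ : T ⊆ Z := sdiff_eq_empty_iff_subset.mp (card_eq_zero.mp hn)
    rw [eq_of_subset_of_card_le hTZ hcard.ge]
  | succ n ih =>
    obtain ⟨i, hi⟩ : (T \ Z).Nonempty := by
      rw [← card_pos, hn]; omega
    obtain ⟨j, hj⟩ : (Z \ T).Nonempty := by
      rw [← card_pos, card_sdiff_comm hcard.symm, hn]; omega
    have hiS := mem_of_mem_sdiff_of_sdiff_eq hsd hi
    have hjS := mem_of_mem_sdiff_of_sdiff_eq hsd.symm hj
    rw [mem_sdiff] at hi hj
    rw [← hS.apply_insert_erase hiS hjS hi.1 hj.2]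
    refine ih ?_ ?_ ?_
    · rw [insert_erase_sdiff_of_mem hiS hjS, hsd]
    · rw [card_insert_erase_of_mem_of_notMem hi.1 hj.2, hcard]
    · rw [insert_sdiff_of_mem _ hj.1, erase_sdiff_comm, card_erase_of_mem (mem_sdiff.mpr hi),
        hn, Nat.add_sub_cancel]

end IsEqClass

theorem stmt_6_general {N : Type*} [DecidableEq N]
    (v : Finset N → ℝ) (S : Finset N) :
    IsEqClass v S ↔
      ∀ T Z : Finset N, T \ S = Z \ S → T.card = Z.card → v T = v Z := by
  refine ⟨fun hS T Z => hS.apply_eq_of_sdiff_eq_of_card_eq, fun H i hi j hj U hiU hjU => ?_⟩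
  refine marg_eq_marg_iff.mpr (H _ _ ?_ ?_)
  · rw [insert_sdiff_of_mem _ hi, insert_sdiff_of_mem _ hj]
  · rw [card_insert_of_notMem hiU, card_insert_of_notMem hjU]

/-- `S` is an equivalence class in `v` iff `v(T) = v(Z)` for all
coalitions `T, Z` with `T∖S = Z∖S` and `|T| = |Z|`. -/
theorem stmt_6 {N : Type*} [Fintype N] [DecidableEq N] [Nonempty N]
    (v : Finset N → ℝ) (hv : v ∅ = 0) (S : Finset N) :
    IsEqClass v S ↔
      ∀ T Z : Finset N, T \ S = Z \ S → T.card = Z.card → v T = v Z :=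
  stmt_6_general v S
end

section
/- Let v be a TU game, S an equivalence class in v, and k ∈ N∖S. Then for all coalitions T, Z ⊆ N with T∖S = Z∖S and |T| = |Z|, the marginal contributions of k agree: v'_k(T) = v'_k(Z). -/
open Finset

namespace Finset

variable {N α : Type*} [DecidableEq N]

theorem apply_eq_of_sdiff_eq_of_card_eq {f : Finset N → α} {S : Finset N}
    (hf : ∀ i ∈ S, ∀ j ∈ S, ∀ U : Finset N, i ∉ U → j ∉ U → f (insert i U) = f (insert j U))
    {T Z : Finset N} (hTZ : T \ S = Z \ S) (hcard : #T = #Z) : f T = f Z := by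
  by_cases hsub : T ⊆ Z
  · rw [eq_of_subset_of_card_le hsub hcard.ge]
  obtain ⟨i, hiT, hiZ⟩ := not_subset.mp hsub
  obtain ⟨j, hjZ, hjT⟩ : ∃ j ∈ Z, j ∉ T := not_subset.mp fun hZT =>
    hsub (eq_of_subset_of_card_le hZT hcard.le).ge
  have hiS : i ∈ S := by_contra fun hiS => hiZ (mem_sdiff.mp (hTZ ▸ mem_sdiff.mpr ⟨hiT, hiS⟩)).1
  have hjS : j ∈ S := by_contra fun hjS => hjT (mem_sdiff.mp (hTZ ▸ mem_sdiff.mpr ⟨hjZ, hjS⟩)).1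
  have hjT' : j ∉ T.erase i := fun h => hjT (mem_of_mem_erase h)
  have hswap : f T = f (insert j (T.erase i)) := by
    simpa only [insert_erase hiT] using hf i hiS j hjS _ (notMem_erase i T) hjT'
  rw [hswap]
  refine apply_eq_of_sdiff_eq_of_card_eq hf ?_ ?_
  · rw [← hTZ]
    ext x
    simp only [mem_sdiff, mem_insert, mem_erase]
    grind
  · rw [card_insert_of_notMem hjT', card_erase_add_one hiT, hcard]
termination_by #(T \ Z)
decreasing_by
  have hdiff : insert j (T.erase i) \ Z = (T \ Z).erase i := by
    ext x
    simp only [mem_sdiff, mem_insert, mem_erase]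
    grind
  rw [hdiff]
  exact card_erase_lt_of_mem (mem_sdiff.mpr ⟨hiT, hiZ⟩)

end Finset

namespace IsEqClass

variable {N : Type*} [DecidableEq N] {v : Finset N → ℝ} {S U : Finset N} {i j : N}

theorem apply_insert_eq (hS : IsEqClass v S) (hi : i ∈ S) (hj : j ∈ S) (hiU : i ∉ U)
    (hjU : j ∉ U) : v (insert i U) = v (insert j U) :=
  sub_left_inj.mp (hS i hi j hj U hiU hjU)

theorem marg_insert_eq (hS : IsEqClass v S) {k : N} (hk : k ∉ S) (hi : i ∈ S) (hj : j ∈ S)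
    (hiU : i ∉ U) (hjU : j ∉ U) : marg v k (insert i U) = marg v k (insert j U) := by
  have hik : i ∉ insert k U := by simp [hiU, ne_of_mem_of_not_mem hi hk]
  have hjk : j ∉ insert k U := by simp [hjU, ne_of_mem_of_not_mem hj hk]
  rw [marg, marg, insert_comm k i, insert_comm k j, hS.apply_insert_eq hi hj hik hjk,
    hS.apply_insert_eq hi hj hiU hjU]

end IsEqClass

theorem stmt_7_general {N : Type*} [DecidableEq N]
    (v : Finset N → ℝ) (S : Finset N) (hS : IsEqClass v S)
    (k : N) (hk : k ∉ S) :
    ∀ T Z : Finset N, T \ S = Z \ S → T.card = Z.card →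
      marg v k T = marg v k Z :=
  fun _ _ hTZ hcard => apply_eq_of_sdiff_eq_of_card_eq
    (fun _ hi _ hj _ hiU hjU => hS.marg_insert_eq hk hi hj hiU hjU) hTZ hcard

/-- if `S` is an equivalence class in `v` and `k ∉ S`, then
`v'_k(T) = v'_k(Z)` whenever `T∖S = Z∖S` and `|T| = |Z|`. -/
theorem stmt_7 {N : Type*} [Fintype N] [DecidableEq N]
    (v : Finset N → ℝ) (hv : v ∅ = 0) (S : Finset N) (hS : IsEqClass v S)
    (k : N) (hk : k ∉ S) :
    ∀ T Z : Finset N, T \ S = Z \ S → T.card = Z.card →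
      marg v k T = marg v k Z :=
  stmt_7_general v S hS k hk
end

section
/- The class of strictly convex TU games is EMP-closed: for every strictly convex game v, every equivalence class S ⊊ N in v, and every k ∈ N∖S, there exists a strictly convex game w such that S ∪ {k} is an equivalence class in w and w'_k = v'_k. -/
/-- A strictly convex TU game. -/
def StrictlyConvexGame {N : Type*} [DecidableEq N] (v : Finset N → ℝ) : Prop :=
  ∀ S T : Finset N, ¬ S ⊆ T → ¬ T ⊆ S → v S + v T < v (S ∪ T) + v (S ∩ T)

section

open Finset

variable {N : Type*} [DecidableEq N]

theorem StrictlyConvexGame.marg_lt_marg {v : Finset N → ℝ} (hv : StrictlyConvexGame v)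
    {x : N} {U V : Finset N} (hx : x ∉ V) (hUV : U ⊂ V) : marg v x U < marg v x V := by
  have key := hv (insert x U) V (fun h => hx (h (mem_insert_self x U)))
    (fun h => hUV.2 ((subset_insert_iff_of_notMem hx).1 h))
  rw [insert_union, union_eq_right.2 hUV.1, insert_inter_of_notMem hx,
    inter_eq_left.2 hUV.1] at key
  unfold marg
  linarith

theorem StrictlyConvexGame.marg_lt_marg_insert {v : Finset N → ℝ} (hv : StrictlyConvexGame v)
    {x y : N} {U : Finset N} (hx : x ∉ insert y U) (hy : y ∉ U) :
    marg v x U < marg v x (insert y U) :=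
  hv.marg_lt_marg hx (ssubset_insert hy)

theorem abs_marg_le {v : Finset N → ℝ} {B : ℝ} (hB : ∀ A, |v A| ≤ B) (i : N) (A : Finset N) :
    |marg v i A| ≤ 2 * B := by
  rw [marg, two_mul]
  exact (abs_sub _ _).trans (add_le_add (hB _) (hB _))

def StrictlyIncreasingMarginals (w : Finset N → ℝ) : Prop :=
  ∀ x y (Z : Finset N), x ≠ y → x ∉ Z → y ∉ Z → marg w x Z < marg w x (insert y Z)

namespace StrictlyIncreasingMarginals

variable {w : Finset N → ℝ}

theorem marg_le_marg_union (hw : StrictlyIncreasingMarginals w) {x : N} {U : Finset N}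
    (D : Finset N) (hx : x ∉ U ∪ D) : marg w x U ≤ marg w x (U ∪ D) := by
  induction D using Finset.induction_on with
  | empty => simp
  | insert a D _ ih =>
    rw [union_insert] at hx ⊢
    have hxa : x ≠ a := fun h => hx (h ▸ mem_insert_self _ _)
    have hxUD : x ∉ U ∪ D := fun h => hx (mem_insert_of_mem h)
    by_cases ha : a ∈ U ∪ D
    · rw [insert_eq_of_mem ha]; exact ih hxUD
    · exact (ih hxUD).trans (hw x a _ hxa hxUD ha).le

theorem marg_le_marg (hw : StrictlyIncreasingMarginals w) {x : N} {U V : Finset N}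
    (hx : x ∉ V) (hUV : U ⊆ V) : marg w x U ≤ marg w x V := by
  have h := hw.marg_le_marg_union V (by rwa [union_eq_right.2 hUV])
  rwa [union_eq_right.2 hUV] at h

theorem marg_lt_marg (hw : StrictlyIncreasingMarginals w) {x : N} {U V : Finset N}
    (hx : x ∉ V) (hUV : U ⊂ V) : marg w x U < marg w x V := by
  obtain ⟨a, haV, haU⟩ := (ssubset_iff_of_subset hUV.1).1 hUV
  have hxV' : x ∉ V.erase a := fun h => hx (mem_of_mem_erase h)
  calc marg w x U ≤ marg w x (V.erase a) := hw.marg_le_marg hxV' (subset_erase.2 ⟨hUV.1, haU⟩)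
    _ < marg w x (insert a (V.erase a)) :=
        hw x a _ (fun h => hx (h ▸ haV)) hxV' (notMem_erase a V)
    _ = marg w x V := by rw [insert_erase haV]

theorem sub_lt_sub_of_ssubset (hw : StrictlyIncreasingMarginals w) {B C D : Finset N}
    (hCB : C ⊂ B) (hD : D.Nonempty) (hDB : Disjoint D B) :
    w (C ∪ D) - w C < w (B ∪ D) - w B := by
  induction hD using Finset.Nonempty.cons_induction with
  | singleton a =>
    have ha : a ∉ B := disjoint_singleton_left.1 hDB
    simpa [marg, union_comm _ ({a} : Finset N), ← insert_eq] using hw.marg_lt_marg ha hCB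
  | cons a D haD hD ih =>
    rw [cons_eq_insert, disjoint_insert_left] at hDB
    have hsub : C ∪ D ⊆ B ∪ D := union_subset_union hCB.1 subset_rfl
    have hstep := hw.marg_le_marg (x := a) (by simp [haD, hDB.1]) hsub
    simp only [marg, cons_eq_insert, union_insert] at hstep ⊢
    linarith [ih hDB.2]

theorem strictlyConvexGame (hw : StrictlyIncreasingMarginals w) : StrictlyConvexGame w := by
  intro A B hAB hBA
  have key := hw.sub_lt_sub_of_ssubset (C := A ∩ B) (D := A \ B)
    ⟨inter_subset_right, fun h => hBA (h.trans inter_subset_left)⟩ (sdiff_nonempty.2 hAB)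
    sdiff_disjoint
  rw [union_comm, sdiff_union_inter, union_sdiff_self_eq_union, union_comm B A] at key
  linarith

end StrictlyIncreasingMarginals

namespace IsEqClass

variable {v : Finset N → ℝ} {S : Finset N}

theorem apply_insert_erase_s16 (hS : IsEqClass v S) {i j : N} {A : Finset N} (hi : i ∈ S)
    (hj : j ∈ S) (hiA : i ∈ A) (hjA : j ∉ A) : v (insert j (A.erase i)) = v A := by
  have h := hS i hi j hj (A.erase i) (notMem_erase i A) (fun h => hjA (mem_of_mem_erase h))
  rw [marg, marg, insert_erase hiA] at h
  linarith

theorem apply_eq (hS : IsEqClass v S) {A B : Finset N} (hAB : A \ B ⊆ S) (hBA : B \ A ⊆ S)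
    (hcard : #A = #B) : v A = v B := by
  induction h : #(A \ B) generalizing A with
  | zero =>
    have hsub : A ⊆ B := sdiff_eq_empty_iff_subset.1 (card_eq_zero.1 h)
    rw [eq_of_subset_of_card_le hsub hcard.ge]
  | succ n ih =>
    obtain ⟨i, hi⟩ : (A \ B).Nonempty := card_pos.1 (by omega)
    obtain ⟨j, hj⟩ : (B \ A).Nonempty := card_pos.1 (by rw [← card_sdiff_comm hcard]; omega)
    have hA'B : insert j (A.erase i) \ B = (A \ B).erase i := by
      ext x; simp only [mem_sdiff, mem_insert, mem_erase] at hj ⊢; aesop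
    have hBA' : B \ insert j (A.erase i) = (B \ A).erase j := by
      ext x; simp only [mem_sdiff, mem_insert, mem_erase] at hi ⊢; aesop
    rw [mem_sdiff] at hi hj
    have hcard' : #(insert j (A.erase i)) = #A := by
      rw [card_insert_of_notMem (fun h => hj.2 (mem_of_mem_erase h)), card_erase_of_mem hi.1,
        Nat.sub_add_cancel (card_pos.2 ⟨i, hi.1⟩)]
    rw [← hS.apply_insert_erase_s16 (hAB (mem_sdiff.2 hi)) (hBA (mem_sdiff.2 hj)) hi.1 hj.2]
    refine ih ?_ ?_ (hcard'.trans hcard) ?_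
    · rw [hA'B]; exact (erase_subset _ _).trans hAB
    · rw [hBA']; exact (erase_subset _ _).trans hBA
    · rw [hA'B, card_erase_of_mem (mem_sdiff.2 hi), h, Nat.add_sub_cancel]

theorem marg_eq (hS : IsEqClass v S) {k : N} {A B : Finset N}
    (hkA : k ∉ A) (hkB : k ∉ B) (hAB : A \ B ⊆ S) (hBA : B \ A ⊆ S) (hcard : #A = #B) :
    marg v k A = marg v k B := by
  have hAB' : insert k A \ insert k B ⊆ S := by
    rw [insert_sdiff_insert]; exact (sdiff_subset_sdiff subset_rfl (subset_insert k B)).trans hAB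
  have hBA' : insert k B \ insert k A ⊆ S := by
    rw [insert_sdiff_insert]; exact (sdiff_subset_sdiff subset_rfl (subset_insert k A)).trans hBA
  have hcard' : #(insert k A) = #(insert k B) := by
    rw [card_insert_of_notMem hkA, card_insert_of_notMem hkB, hcard]
  rw [marg, marg, hS.apply_eq hAB hBA hcard, hS.apply_eq hAB' hBA' hcard']

end IsEqClass

noncomputable def prefixSet (S : Finset N) (t : ℕ) : Finset N := (S.toList.take t).toFinset

theorem prefixSet_subset (S : Finset N) (t : ℕ) : prefixSet S t ⊆ S := fun a ha => by
  simpa using List.mem_of_mem_take (List.mem_toFinset.1 ha)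

theorem card_prefixSet {S : Finset N} {t : ℕ} (ht : t ≤ #S) : #(prefixSet S t) = t := by
  rw [prefixSet, List.toFinset_card_of_nodup (S.nodup_toList.sublist (List.take_sublist t _))]
  simp [ht]

theorem prefixSet_ssubset_succ {S : Finset N} {t : ℕ} (ht : t < #S) :
    prefixSet S t ⊂ prefixSet S (t + 1) := by
  refine ⟨fun a ha => ?_, fun h => ?_⟩
  · exact List.mem_toFinset.2 ((List.take_prefix_take_left (Nat.le_succ t)).subset
      (List.mem_toFinset.1 ha))
  · have := card_le_card h
    rw [card_prefixSet ht, card_prefixSet ht.le] at this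
    omega

def blockGame (K : Finset N) (g : Finset N → ℝ) (φ : Finset N → ℕ → ℝ) (T : Finset N) : ℝ :=
  g (T \ K) + ∑ t ∈ range #(T ∩ K), φ (T \ K) t

section blockGame

variable {K : Finset N} {g : Finset N → ℝ} {φ : Finset N → ℕ → ℝ}

theorem blockGame_empty : blockGame K g φ ∅ = g ∅ := by
  simp [blockGame]

theorem marg_blockGame_of_mem {i : N} {U : Finset N} (hi : i ∈ K) (hiU : i ∉ U) :
    marg (blockGame K g φ) i U = φ (U \ K) #(U ∩ K) := by
  rw [marg, blockGame, blockGame, insert_sdiff_of_mem _ hi, insert_inter_of_mem hi,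
    card_insert_of_notMem (fun h => hiU (mem_of_mem_inter_left h)), sum_range_succ]
  ring

theorem marg_blockGame_of_notMem {x : N} (hx : x ∉ K) (U : Finset N) :
    marg (blockGame K g φ) x U = marg g x (U \ K) +
      ∑ t ∈ range #(U ∩ K), (φ (insert x (U \ K)) t - φ (U \ K) t) := by
  rw [marg, marg, blockGame, blockGame, insert_sdiff_of_notMem _ hx, insert_inter_of_notMem hx,
    sum_sub_distrib]
  ring

theorem isEqClass_blockGame : IsEqClass (blockGame K g φ) K := fun _ hi _ hj _ hiU hjU => by
  rw [marg_blockGame_of_mem hi hiU, marg_blockGame_of_mem hj hjU]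

end blockGame

noncomputable def empGame (v : Finset N → ℝ) (S : Finset N) (k : N) (M : ℝ) :
    Finset N → ℝ :=
  blockGame (insert k S) (fun C => v C + M * #C ^ 2) (fun C t => marg v k (C ∪ prefixSet S t))

section empGame

variable {v : Finset N → ℝ} {S : Finset N} {k : N} {M : ℝ}

theorem marg_empGame_self (hS : IsEqClass v S) (hk : k ∉ S) {T : Finset N} (hkT : k ∉ T) :
    marg (empGame v S k M) k T = marg v k T := by
  rw [empGame, marg_blockGame_of_mem (mem_insert_self k S) hkT, inter_insert_of_notMem hkT]
  have hP := prefixSet_subset S #(T ∩ S)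
  have hdisj : Disjoint (T \ insert k S) (prefixSet S #(T ∩ S)) :=
    disjoint_of_subset_right hP (disjoint_of_subset_right (subset_insert k S) sdiff_disjoint)
  apply hS.marg_eq
  · intro h
    rcases mem_union.1 h with h | h
    · exact (mem_sdiff.1 h).2 (mem_insert_self k S)
    · exact hk (hP h)
  · exact hkT
  · exact fun _ _ => by grind
  · exact fun _ _ => by grind
  · rw [card_union_of_disjoint hdisj, card_prefixSet (card_le_card inter_subset_right),
      sdiff_insert_of_notMem hkT, card_sdiff_add_card_inter]

theorem marg_lt_marg_union_prefixSet_succ (hv : StrictlyConvexGame v) {C : Finset N}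
    (hkC : k ∉ C) (hk : k ∉ S) (hCS : Disjoint C S) {t : ℕ} (ht : t < #S) :
    marg v k (C ∪ prefixSet S t) < marg v k (C ∪ prefixSet S (t + 1)) := by
  have hP := prefixSet_ssubset_succ ht
  obtain ⟨e, heP, heP'⟩ := (ssubset_iff_of_subset hP.1).1 hP
  have heC : e ∉ C := disjoint_right.1 hCS (prefixSet_subset S _ heP)
  refine hv.marg_lt_marg ?_ ((ssubset_iff_of_subset (union_subset_union subset_rfl hP.1)).2
    ⟨e, mem_union_right _ heP, fun h => (mem_union.1 h).elim heC heP'⟩)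
  exact fun h => (mem_union.1 h).elim hkC (fun h => hk (prefixSet_subset S _ h))

theorem marg_lt_marg_insert_union_prefixSet (hv : StrictlyConvexGame v) {C : Finset N}
    (hkC : k ∉ C) (hk : k ∉ S) {a : N} (haK : a ∉ insert k S) (haC : a ∉ C) (t : ℕ) :
    marg v k (C ∪ prefixSet S t) < marg v k (insert a C ∪ prefixSet S t) := by
  have haP : a ∉ prefixSet S t := fun h => haK (mem_insert_of_mem (prefixSet_subset S t h))
  have hkP : k ∉ prefixSet S t := fun h => hk (prefixSet_subset S t h)
  have hka : k ≠ a := fun h => haK (h ▸ mem_insert_self k S)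
  rw [insert_union]
  exact hv.marg_lt_marg_insert (by simp [hka, hkC, hkP]) (by simp [haC, haP])

theorem marg_empGame_lt_insert_of_notMem (hv : StrictlyConvexGame v) {B : ℝ}
    (hB : ∀ A, |v A| ≤ B) (hM : 4 * (#S + 1) * B ≤ M) {x y : N} {Z : Finset N}
    (hxK : x ∉ insert k S) (hyK : y ∉ insert k S) (hxy : x ≠ y) (hxZ : x ∉ Z) (hyZ : y ∉ Z) :
    marg (empGame v S k M) x Z < marg (empGame v S k M) x (insert y Z) := by
  rw [empGame, marg_blockGame_of_notMem hxK, marg_blockGame_of_notMem hxK,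
    insert_sdiff_of_notMem _ hyK, insert_inter_of_notMem hyK]
  set C := Z \ insert k S
  set r := #(Z ∩ insert k S)
  have hxC : x ∉ C := fun h => hxZ (mem_sdiff.1 h).1
  have hyC : y ∉ C := fun h => hyZ (mem_sdiff.1 h).1
  have hxyC : x ∉ insert y C := by simp [hxy, hxC]
  have hg : ∀ D, x ∉ D → marg (fun C => v C + M * #C ^ 2) x D = marg v x D + M * (2 * #D + 1) :=
    fun D hxD => by simp only [marg, card_insert_of_notMem hxD]; push_cast; ring
  rw [hg C hxC, hg _ hxyC, card_insert_of_notMem hyC]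
  have hv2 : marg v x C < marg v x (insert y C) := hv.marg_lt_marg_insert hxyC hyC
  -- each summand is a third difference of `v`, hence at least `-8 * B`
  have hsum : ∑ _t ∈ range r, (-(8 * B)) ≤ ∑ t ∈ range r,
      ((marg v k (insert x (insert y C) ∪ prefixSet S t) - marg v k (insert y C ∪ prefixSet S t))
        - (marg v k (insert x C ∪ prefixSet S t) - marg v k (C ∪ prefixSet S t))) := by
    refine sum_le_sum fun t _ => ?_
    have := abs_marg_le hB k
    linarith [abs_le.1 (this (insert x (insert y C) ∪ prefixSet S t)),
      abs_le.1 (this (insert y C ∪ prefixSet S t)), abs_le.1 (this (insert x C ∪ prefixSet S t)),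
      abs_le.1 (this (C ∪ prefixSet S t))]
  have hr : (r : ℝ) ≤ #S + 1 := by
    exact_mod_cast (card_le_card inter_subset_right).trans (card_insert_le k S)
  have hB0 : 0 ≤ B := (abs_nonneg _).trans (hB ∅)
  rw [sum_const, card_range, nsmul_eq_mul, sum_sub_distrib] at hsum
  push_cast
  nlinarith

theorem strictlyIncreasingMarginals_empGame (hv : StrictlyConvexGame v) (hk : k ∉ S) {B : ℝ}
    (hB : ∀ A, |v A| ≤ B) (hM : 4 * (#S + 1) * B ≤ M) :
    StrictlyIncreasingMarginals (empGame v S k M) := by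
  intro x y Z hxy hxZ hyZ
  have hxyZ : x ∉ insert y Z := by simp [hxy, hxZ]
  set C := Z \ insert k S
  set r := #(Z ∩ insert k S)
  have hkC : k ∉ C := fun h => (mem_sdiff.1 h).2 (mem_insert_self k S)
  by_cases hxK : x ∈ insert k S
  · rw [empGame, marg_blockGame_of_mem hxK hxZ, marg_blockGame_of_mem hxK hxyZ]
    by_cases hyK : y ∈ insert k S
    · rw [insert_sdiff_of_mem _ hyK, insert_inter_of_mem hyK,
        card_insert_of_notMem (fun h => hyZ (mem_of_mem_inter_left h))]
      have hr : r < #S := by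
        have hsub : insert x (insert y (Z ∩ insert k S)) ⊆ insert k S :=
          insert_subset hxK (insert_subset hyK inter_subset_right)
        have := card_le_card hsub
        rw [card_insert_of_notMem (by simp [hxy, hxZ]), card_insert_of_notMem (by simp [hyZ]),
          card_insert_of_notMem hk] at this
        omega
      exact marg_lt_marg_union_prefixSet_succ hv hkC hk
        (disjoint_of_subset_right (subset_insert k S) sdiff_disjoint) hr
    · rw [insert_sdiff_of_notMem _ hyK, insert_inter_of_notMem hyK]
      exact marg_lt_marg_insert_union_prefixSet hv hkC hk hyK (fun h => hyZ (mem_sdiff.1 h).1) r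
  · by_cases hyK : y ∈ insert k S
    · rw [empGame, marg_blockGame_of_notMem hxK, marg_blockGame_of_notMem hxK,
        insert_sdiff_of_mem _ hyK, insert_inter_of_mem hyK,
        card_insert_of_notMem (fun h => hyZ (mem_of_mem_inter_left h)), sum_range_succ]
      linarith [marg_lt_marg_insert_union_prefixSet hv hkC hk hxK
        (fun h => hxZ (mem_sdiff.1 h).1) r]
    · exact marg_empGame_lt_insert_of_notMem hv hB hM hxK hyK hxy hxZ hyZ

end empGame

end

theorem stmt_16_general {N : Type*} [Fintype N] [DecidableEq N]
    (v : Finset N → ℝ) (hv : v ∅ = 0) (hconv : StrictlyConvexGame v)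
    (S : Finset N) (hS : IsEqClass v S)
    (k : N) (hk : k ∉ S) :
    ∃ w : Finset N → ℝ, w ∅ = 0 ∧ StrictlyConvexGame w ∧
      IsEqClass w (insert k S) ∧
      ∀ T : Finset N, k ∉ T → marg w k T = marg v k T := by
  have hB : ∀ A, |v A| ≤ ∑ A', |v A'| := fun A =>
    Finset.single_le_sum (f := fun A' => |v A'|) (fun _ _ => abs_nonneg _) (Finset.mem_univ A)
  refine ⟨empGame v S k (4 * (S.card + 1) * ∑ A, |v A|), ?_,
    (strictlyIncreasingMarginals_empGame hconv hk hB le_rfl).strictlyConvexGame,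
    isEqClass_blockGame, fun T hkT => marg_empGame_self hS hk hkT⟩
  simp [empGame, blockGame_empty, hv]

/-- the class of strictly convex games is EMP-closed. -/
theorem stmt_16 {N : Type*} [Fintype N] [DecidableEq N]
    (v : Finset N → ℝ) (hv : v ∅ = 0) (hconv : StrictlyConvexGame v)
    (S : Finset N) (hSsub : S ⊂ Finset.univ) (hS : IsEqClass v S)
    (k : N) (hk : k ∉ S) :
    ∃ w : Finset N → ℝ, w ∅ = 0 ∧ StrictlyConvexGame w ∧
      IsEqClass w (insert k S) ∧
      ∀ T : Finset N, k ∉ T → marg w k T = marg v k T :=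
  stmt_16_general v hv hconv S hS k hk
end

section
/- The class of essential games is not EMP-closed for |N| ≥ 3. Specifically, for N = {1,2,3} and v given by v({1})=v({2})=0, v({3})=10, v({1,2})=50, v({1,3})=v({2,3})=0, v(N)=20 (in which {1,2} is an equivalence class), the unique game w in which N is an equivalence class and w'_3 = v'_3 is not essential. -/
/-- An essential TU game: `v(N) > Σ_{i∈N} v({i})`. -/
def EssentialGame {N : Type*} [Fintype N] [DecidableEq N] (v : Finset N → ℝ) : Prop :=
  v Finset.univ > ∑ i : N, v {i}

/-- The game of Example 2(1): players `0,1,2` stand for `1,2,3`;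
`v({1})=v({2})=0`, `v({3})=10`, `v({1,2})=50`, `v({1,3})=v({2,3})=0`, `v(N)=20`. -/
noncomputable def exGame : Finset (Fin 3) → ℝ := fun S =>
  if S = {0, 1} then 50
  else if S = {2} then 10
  else if S = Finset.univ then 20
  else 0

/-!
If every player is symmetric in `w`, then `w S` depends only on `|S|`, because a coalition can be
turned into any other of the same size by exchanging one member at a time. Writing `w_k` for the
value on `k`-coalitions, the marginals of player 3 copied from `v` give `w_1 - w_0 = 10`,
`w_2 - w_1 = 0` and `w_3 - w_2 = -30`, so `w_3 = -20 < 30 = 3 w_1`.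
-/

section

variable {N : Type*} [DecidableEq N]

lemma IsEqClass.apply_insert_eq_s17 {v : Finset N → ℝ} {C U : Finset N} (hC : IsEqClass v C)
    {i j : N} (hi : i ∈ C) (hj : j ∈ C) (hiU : i ∉ U) (hjU : j ∉ U) :
    v (insert i U) = v (insert j U) := by
  have h := hC i hi j hj U hiU hjU
  unfold marg at h
  linarith

lemma IsEqClass.apply_eq_of_card_eq [Fintype N] {v : Finset N → ℝ}
    (hv : IsEqClass v Finset.univ) {S T : Finset N} (hST : S.card = T.card) : v S = v T := by
  induction hn : (S \ T).card generalizing S with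
  | zero =>
    have hsub : S ⊆ T := Finset.sdiff_eq_empty_iff_subset.mp (Finset.card_eq_zero.mp hn)
    rw [Finset.eq_of_subset_of_card_le hsub hST.ge]
  | succ n ih =>
    obtain ⟨i, hi⟩ : (S \ T).Nonempty := Finset.card_pos.mp (by omega)
    obtain ⟨j, hj⟩ : (T \ S).Nonempty :=
      Finset.card_pos.mp (by rw [← Finset.card_sdiff_comm hST]; omega)
    rw [Finset.mem_sdiff] at hi hj
    have hiS : i ∉ S.erase i := Finset.notMem_erase i S
    have hjS : j ∉ S.erase i := fun h => hj.2 (Finset.mem_of_mem_erase h)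
    calc v S = v (insert i (S.erase i)) := by rw [Finset.insert_erase hi.1]
      _ = v (insert j (S.erase i)) :=
        hv.apply_insert_eq_s17 (Finset.mem_univ i) (Finset.mem_univ j) hiS hjS
      _ = v T := by
        apply ih
        · rw [Finset.card_insert_of_notMem hjS, Finset.card_erase_add_one hi.1, hST]
        · rw [Finset.insert_sdiff_of_mem _ hj.1, Finset.erase_sdiff_comm,
            Finset.card_erase_of_mem (Finset.mem_sdiff.mpr hi), hn, Nat.add_sub_cancel]

lemma isEqClass_pair_of_swap_invariant {v : Finset N → ℝ} {i j : N}
    (hv : ∀ S, v (S.image (Equiv.swap i j)) = v S) : IsEqClass v {i, j} := by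
  have hswap : ∀ U : Finset N, i ∉ U → j ∉ U → v (insert i U) = v (insert j U) := by
    intro U hiU hjU
    have hU : U.image (Equiv.swap i j) = U := by
      refine (Finset.image_congr fun x hx => ?_).trans U.image_id
      exact Equiv.swap_apply_of_ne_of_ne (ne_of_mem_of_not_mem hx hiU)
        (ne_of_mem_of_not_mem hx hjU)
    rw [← hv, Finset.image_insert, Equiv.swap_apply_left, hU]
  intro a ha b hb U haU hbU
  unfold marg
  simp only [Finset.mem_insert, Finset.mem_singleton] at ha hb
  rcases ha with rfl | rfl <;> rcases hb with rfl | rfl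
  · rfl
  · rw [hswap U haU hbU]
  · rw [hswap U hbU haU]
  · rfl

end

lemma exGame_image_swap (S : Finset (Fin 3)) :
    exGame (S.image (Equiv.swap 0 1)) = exGame S := by
  have h01 : S.image (Equiv.swap 0 1) = {0, 1} ↔ S = {0, 1} := by revert S; decide
  have h2 : S.image (Equiv.swap 0 1) = {2} ↔ S = {2} := by revert S; decide
  have huniv : S.image (Equiv.swap 0 1) = Finset.univ ↔ S = Finset.univ := by revert S; decide
  simp only [exGame, h01, h2, huniv]

lemma essentialGame_exGame : EssentialGame exGame := by
  norm_num +decide [EssentialGame, exGame, Fin.sum_univ_three]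

/-- the class of essential games is not EMP-closed: `exGame` is
essential with equivalence class `{1,2}` (here `{0,1}`), yet any game `w` in
which `N` is an equivalence class and `w'_3 = exGame'_3` fails to be essential. -/
theorem stmt_17 :
    EssentialGame exGame ∧ IsEqClass exGame {0, 1} ∧
      ∀ w : Finset (Fin 3) → ℝ, w ∅ = 0 →
        IsEqClass w Finset.univ →
        (∀ T : Finset (Fin 3), (2 : Fin 3) ∉ T → marg w 2 T = marg exGame 2 T) →
        ¬ EssentialGame w := by
  refine ⟨essentialGame_exGame, isEqClass_pair_of_swap_invariant exGame_image_swap, ?_⟩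
  intro w hw0 hsym hmarg hess
  have h0 : w {0} = w {2} := hsym.apply_eq_of_card_eq rfl
  have h1 : w {1} = w {2} := hsym.apply_eq_of_card_eq rfl
  have h02 : w {0, 1} = w {2, 0} := hsym.apply_eq_of_card_eq rfl
  have hm0 := hmarg ∅ (by decide)
  have hm1 := hmarg {0} (by decide)
  have hm2 := hmarg {0, 1} (by decide)
  rw [marg, marg, show insert (2 : Fin 3) ({0, 1} : Finset (Fin 3)) = Finset.univ by decide] at hm2
  norm_num +decide [marg, exGame] at hm0 hm1 hm2
  rw [EssentialGame, Fin.sum_univ_three] at hess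
  linarith
end
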